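/- arXiv:1502.01988 — 2 statements merged into one kernel-verified Lean document; each statement's English description precedes it below -/
import Mathlib

section
/- Let Z be a real random variable satisfying the tail bound P(|Z| > z) ≤ 2·exp(−c·z²/(2σ²)) for all z ≥ 0, with constants c, σ > 0. Then for any t ≥ 0, the soft-thresholded variable satisfies E[η_{σt}(Z)²] ≤ C·σ²·exp(−c·t²/2) for some constant C depending only on c. -/
/-!
Soft-thresholding at level `s ≥ 0` shifts tails: `|η_s(y)| > z ↔ |y| > z + s` for `z ≥ 0`.
Since `(z + σt)² ≥ z² + σ²t²`, the tail of `|η_{σt}(Z)|` is at most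
`2 e^{-ct²/2} e^{-κz²}` with `κ = c / (2σ²)`, and the layer-cake formula
`E X² = ∫₀^∞ 2z P(X > z) dz` bounds the second moment by
`2 e^{-ct²/2} · 2 ∫₀^∞ z e^{-κz²} dz = (4σ²/c) e^{-ct²/2}`.
-/

open MeasureTheory

/-- Soft-thresholding at level `t`: `η_t(y) = sign(y)·(|y| − t)₊`. -/
noncomputable def softThreshold (t y : ℝ) : ℝ := Real.sign y * max (|y| - t) 0

open Real Set

lemma sq_softThreshold {s : ℝ} (hs : 0 ≤ s) (y : ℝ) :
    softThreshold s y ^ 2 = max (|y| - s) 0 ^ 2 := by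
  rcases lt_trichotomy y 0 with hy | rfl | hy
  · simp [softThreshold, Real.sign_of_neg hy]
  · simp [softThreshold, hs]
  · simp [softThreshold, Real.sign_of_pos hy]

lemma lt_max_sub_zero_iff {z s y : ℝ} (hz : 0 ≤ z) : z < max (y - s) 0 ↔ z + s < y := by
  rw [lt_max_iff]
  constructor
  · rintro (h | h) <;> linarith
  · exact fun h => Or.inl (by linarith)

lemma exp_neg_mul_add_sq_le {κ a b : ℝ} (hκ : 0 ≤ κ) (ha : 0 ≤ a) (hb : 0 ≤ b) :
    exp (-κ * (a + b) ^ 2) ≤ exp (-κ * b ^ 2) * exp (-κ * a ^ 2) := by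
  rw [← exp_add, exp_le_exp]
  nlinarith [mul_nonneg hκ (mul_nonneg ha hb)]

theorem integral_Ioi_mul_exp_neg_mul_sq {b : ℝ} (hb : 0 < b) :
    ∫ r in Ioi (0 : ℝ), r * exp (-b * r ^ 2) = (2 * b)⁻¹ := by
  have h := integral_mul_cexp_neg_mul_sq (b := (b : ℂ)) (by simpa using hb)
  exact_mod_cast h

theorem lintegral_ofReal_sq_le_of_subgaussian_tail {Ω : Type*} [MeasurableSpace Ω] {μ : Measure Ω}
    {f : Ω → ℝ} (hf_nn : 0 ≤ᵐ[μ] f) (hf : AEMeasurable f μ) {A b : ℝ} (hA : 0 ≤ A) (hb : 0 < b)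
    (htail : ∀ z > 0, μ {ω | z < f ω} ≤ ENNReal.ofReal (A * exp (-b * z ^ 2))) :
    ∫⁻ ω, ENNReal.ofReal (f ω ^ 2) ∂μ ≤ ENNReal.ofReal (A / b) := by
  calc ∫⁻ ω, ENNReal.ofReal (f ω ^ 2) ∂μ
      = 2 * ∫⁻ z in Ioi 0, μ {ω | z < f ω} * ENNReal.ofReal z := by
        have h := lintegral_rpow_eq_lintegral_meas_lt_mul μ hf_nn hf two_pos
        norm_num [Real.rpow_two] at h
        exact h
    _ ≤ 2 * ∫⁻ z in Ioi 0, ENNReal.ofReal (A * (z * exp (-b * z ^ 2))) := by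
        refine mul_le_mul_right (setLIntegral_mono (by fun_prop) fun z hz => ?_) _
        rw [show A * (z * exp (-b * z ^ 2)) = A * exp (-b * z ^ 2) * z by ring,
          ENNReal.ofReal_mul' hz.le]
        exact mul_le_mul_left (htail z hz) _
    _ = 2 * ENNReal.ofReal (A * (2 * b)⁻¹) := by
        have hint : IntegrableOn (fun z : ℝ => A * (z * exp (-b * z ^ 2))) (Ioi 0) :=
          ((integrable_mul_exp_neg_mul_sq hb).const_mul A).integrableOn
        have hnn : 0 ≤ᵐ[volume.restrict (Ioi 0)] fun z : ℝ => A * (z * exp (-b * z ^ 2)) :=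
          ae_restrict_of_forall_mem measurableSet_Ioi fun z (hz : 0 < z) => by positivity
        rw [← ofReal_integral_eq_lintegral_ofReal hint hnn, integral_const_mul,
          integral_Ioi_mul_exp_neg_mul_sq hb]
    _ = ENNReal.ofReal (A / b) := by
        rw [← ENNReal.ofReal_ofNat 2, ← ENNReal.ofReal_mul zero_le_two]
        congr 1
        field_simp

theorem stmt_2 (c : ℝ) (hc : 0 < c) :
    ∃ C > (0 : ℝ), ∀ (Ω : Type) [MeasureSpace Ω]
      [IsProbabilityMeasure (volume : Measure Ω)]
      (Z : Ω → ℝ), Measurable Z → ∀ (σ t : ℝ), 0 < σ → 0 ≤ t →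
      (∀ z : ℝ, 0 ≤ z → volume {ω | z < |Z ω|}
        ≤ ENNReal.ofReal (2 * Real.exp (-(c * z ^ 2) / (2 * σ ^ 2)))) →
      ∫ ω, (softThreshold (σ * t) (Z ω)) ^ 2
        ≤ C * σ ^ 2 * Real.exp (-(c * t ^ 2) / 2) := by
  refine ⟨4 / c, by positivity, fun Ω _ _ Z hZ σ t hσ ht htail => ?_⟩
  set κ := c / (2 * σ ^ 2) with hκ
  have hκ_pos : 0 < κ := by positivity
  have hexponent : ∀ z, -(c * z ^ 2) / (2 * σ ^ 2) = -κ * z ^ 2 := fun z => by ring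
  have hshift : -κ * (σ * t) ^ 2 = -(c * t ^ 2) / 2 := by
    rw [hκ]; field_simp
  have hs : 0 ≤ σ * t := by positivity
  have hf_tail : ∀ z > 0, volume {ω | z < max (|Z ω| - σ * t) 0}
      ≤ ENNReal.ofReal (2 * exp (-(c * t ^ 2) / 2) * exp (-κ * z ^ 2)) := fun z hz => by
    simp only [lt_max_sub_zero_iff hz.le]
    refine (htail _ (by positivity)).trans (ENNReal.ofReal_le_ofReal ?_)
    rw [hexponent, mul_assoc, ← hshift]
    gcongr
    exact exp_neg_mul_add_sq_le hκ_pos.le hz.le hs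
  have hbound := lintegral_ofReal_sq_le_of_subgaussian_tail (ae_of_all _ fun ω => le_max_right _ _)
    (by fun_prop) (by positivity) hκ_pos hf_tail
  simp_rw [sq_softThreshold hs]
  rw [integral_eq_lintegral_of_nonneg_ae (ae_of_all _ fun ω => sq_nonneg _) (by fun_prop)]
  refine ENNReal.toReal_le_of_le_ofReal (by positivity) (hbound.trans_eq ?_)
  rw [hκ]
  congr 1
  field_simp
  ring
end

section
/- (Fano-type minimax lower bound for localization) Consider the Gaussian submatrix model with parameter space Θ of all M = λ·1_R 1_C^T, |R| = k_m, |C| = k_n, and |Θ| = C(m,k_m)·C(n,k_n). For any 0 < α < 1 there is a constant C_α > 0 such that if λ/σ ≤ C_α·√(log(m/k_m)/k_n + log(n/k_n)/k_m), then for any estimator (R̂, Ĉ) of the support based on one observation X = M + Z with i.i.d. N(0,σ²) noise, sup_{M∈Θ} P(R̂ ≠ R or Ĉ ≠ C) ≥ 1 − α − log 2/(k_m·log(m/k_m) + k_n·log(n/k_n)). -/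
open MeasureTheory ProbabilityTheory
open scoped ENNReal

/-- The signal matrix `λ·1_R 1_C^T` (as a function `Fin m → Fin n → ℝ`). -/
def signalMatrix (m n : ℕ) (lam : ℝ) (R : Finset (Fin m)) (C : Finset (Fin n)) :
    Fin m → Fin n → ℝ :=
  fun i j => if i ∈ R ∧ j ∈ C then lam else 0

/-- The distribution of `X = M + Z`, with `Z` having i.i.d. `N(0, σ²)` entries. -/
noncomputable def PM (m n : ℕ) (σ : ℝ) (M : Fin m → Fin n → ℝ) :
    Measure (Fin m → Fin n → ℝ) :=
  Measure.pi fun i => Measure.pi fun j => gaussianReal (M i j) (Real.toNNReal (σ ^ 2))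

/-- The parameter space: all pairs of supports of sizes `k_m`, `k_n`. -/
def Θset (m n k_m k_n : ℕ) : Finset (Finset (Fin m) × Finset (Fin n)) :=
  Finset.univ.filter fun p => p.1.card = k_m ∧ p.2.card = k_n

/-!
Instead of Fano's inequality we compare every `P_p = PM m n σ (signalMatrix …)` with the pure-noise
law `Q = PM m n σ 0`. The sets on which the estimator answers `p ∈ Θ` are disjoint, so one of them
has `Q`-probability at most `1 / |Θ| ≤ e^{-D}`, where `D = k_m log (m/k_m) + k_n log (n/k_n)` by
`C(n,k) ≥ (n/k)^k`. The log-likelihood ratio `ℓ = log dP_p/dQ` is linear in the observation, and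
`∫ e^{(1+θ)ℓ} dQ = e^{θ(1+θ)K}` with `K = λ² k_m k_n / (2σ²)` the Kullback–Leibler divergence.
A Chernoff bound on `{ℓ > 2D/5}` therefore gives `P_p(S) ≤ e^{2D/5} Q(S) + α` for all `S` once
`K ≤ D / (5θ)` with `θ = 1 - 5 log α`, which is the signal-to-noise hypothesis for
`C_α = √(2 / (5θ))`. So `P_p` finds the support with probability at most `e^{-3D/5} + α`, and
`e^{-3D/5} ≤ log 2 / D`.
-/

open Real
open scoped NNReal

lemma ENNReal.ofReal_exp_sum {ι : Type*} (s : Finset ι) (f : ι → ℝ) :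
    ENNReal.ofReal (exp (∑ i ∈ s, f i)) = ∏ i ∈ s, ENNReal.ofReal (exp (f i)) := by
  rw [exp_sum, ENNReal.ofReal_prod_of_nonneg fun i _ => (exp_pos _).le]

namespace MeasureTheory

section Pi

variable {ι : Type*} [Fintype ι] {E : ι → Type*} [∀ i, MeasurableSpace (E i)]
  {μ : ∀ i, Measure (E i)} [∀ i, IsProbabilityMeasure (μ i)] {ℓ : ∀ i, E i → ℝ}

theorem lintegral_pi_prod {f : ∀ i, E i → ℝ≥0∞} (hf : ∀ i, Measurable (f i)) :
    ∫⁻ x, ∏ i, f i (x i) ∂Measure.pi μ = ∏ i, ∫⁻ y, f i y ∂μ i := by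
  rw [lintegral_prod_eq_prod_lintegral_of_indepFun _ _
    (iIndepFun_pi fun i => (hf i).aemeasurable) fun i => (hf i).comp (measurable_pi_apply i)]
  exact Finset.prod_congr rfl fun i _ => (measurePreserving_eval μ i).lintegral_comp (hf i)

theorem Measure.pi_withDensity {f : ∀ i, E i → ℝ≥0∞} (hf : ∀ i, Measurable (f i))
    [∀ i, SigmaFinite ((μ i).withDensity (f i))] :
    Measure.pi (fun i => (μ i).withDensity (f i))
      = (Measure.pi μ).withDensity fun x => ∏ i, f i (x i) := by
  refine Measure.pi_eq fun s hs => ?_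
  rw [withDensity_apply _ (MeasurableSet.univ_pi hs), ← lintegral_indicator (.univ_pi hs)]
  have hind : (Set.univ.pi s).indicator (fun x => ∏ i, f i (x i))
      = fun x => ∏ i, (s i).indicator (f i) (x i) := by
    ext x
    by_cases hx : x ∈ Set.univ.pi s
    · rw [Set.indicator_of_mem hx]
      exact Finset.prod_congr rfl fun i _ => (Set.indicator_of_mem (hx i trivial) _).symm
    · obtain ⟨i, -, hi⟩ := not_forall₂.mp hx
      rw [Set.indicator_of_notMem hx]
      exact (Finset.prod_eq_zero (Finset.mem_univ i) (Set.indicator_of_notMem hi _)).symm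
  rw [hind, lintegral_pi_prod fun i => (hf i).indicator (hs i)]
  exact Finset.prod_congr rfl fun i _ => by
    rw [withDensity_apply _ (hs i), lintegral_indicator (hs i)]

theorem lintegral_exp_sum_pi (hℓ : ∀ i, Measurable (ℓ i)) :
    ∫⁻ x, ENNReal.ofReal (exp (∑ i, ℓ i (x i))) ∂Measure.pi μ
      = ∏ i, ∫⁻ y, ENNReal.ofReal (exp (ℓ i y)) ∂μ i := by
  simp_rw [ENNReal.ofReal_exp_sum]
  exact lintegral_pi_prod fun i => (hℓ i).exp.ennreal_ofReal

theorem Measure.pi_eq_withDensity_exp_sum (hℓ : ∀ i, Measurable (ℓ i))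
    {ν : ∀ i, Measure (E i)} [∀ i, SigmaFinite (ν i)]
    (hν : ∀ i, ν i = (μ i).withDensity fun y => ENNReal.ofReal (exp (ℓ i y))) :
    Measure.pi ν = (Measure.pi μ).withDensity fun x => ENNReal.ofReal (exp (∑ i, ℓ i (x i))) := by
  have : ∀ i, SigmaFinite ((μ i).withDensity fun y => ENNReal.ofReal (exp (ℓ i y))) :=
    fun i => hν i ▸ inferInstance
  simp_rw [ENNReal.ofReal_exp_sum]
  rw [← Measure.pi_withDensity fun i => (hℓ i).exp.ennreal_ofReal]
  exact congrArg Measure.pi (funext hν)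

end Pi

variable {α β : Type*} [MeasurableSpace α]

lemma withDensity_exp_apply_le (Q : Measure α) {ℓ : α → ℝ} (hℓ : Measurable ℓ) {S : Set α}
    (hS : MeasurableSet S) (u : ℝ) {θ : ℝ} (hθ : 0 ≤ θ) :
    Q.withDensity (fun x => ENNReal.ofReal (exp (ℓ x))) S
      ≤ ENNReal.ofReal (exp u) * Q S
        + ENNReal.ofReal (exp (-(θ * u))) * ∫⁻ x, ENNReal.ofReal (exp ((1 + θ) * ℓ x)) ∂Q := by
  set B := {x | ℓ x ≤ u}
  have hB : MeasurableSet B := measurableSet_le hℓ measurable_const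
  have h_low : Q.withDensity (fun x => ENNReal.ofReal (exp (ℓ x))) (S ∩ B)
      ≤ ENNReal.ofReal (exp u) * Q S := by
    rw [withDensity_apply _ (hS.inter hB)]
    calc ∫⁻ x in S ∩ B, ENNReal.ofReal (exp (ℓ x)) ∂Q
        ≤ ∫⁻ _ in S ∩ B, ENNReal.ofReal (exp u) ∂Q :=
          setLIntegral_mono measurable_const fun x hx => by gcongr; exact hx.2
      _ ≤ ENNReal.ofReal (exp u) * Q S := by
          rw [setLIntegral_const]
          gcongr
          exact Set.inter_subset_left
  -- Chernoff: on `{ℓ > u}` the density `exp ℓ` is at most `exp ((1 + θ) ℓ - θ u)`.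
  have h_high : Q.withDensity (fun x => ENNReal.ofReal (exp (ℓ x))) Bᶜ
      ≤ ENNReal.ofReal (exp (-(θ * u))) * ∫⁻ x, ENNReal.ofReal (exp ((1 + θ) * ℓ x)) ∂Q := by
    rw [withDensity_apply _ hB.compl, ← lintegral_const_mul _ (by fun_prop)]
    refine (setLIntegral_mono (by fun_prop) fun x hx => ?_).trans (setLIntegral_le_lintegral _ _)
    have hx : u < ℓ x := not_le.mp hx
    rw [← ENNReal.ofReal_mul (exp_pos _).le, ← exp_add]
    gcongr
    nlinarith
  calc Q.withDensity (fun x => ENNReal.ofReal (exp (ℓ x))) S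
      ≤ Q.withDensity (fun x => ENNReal.ofReal (exp (ℓ x))) (S ∩ B)
        + Q.withDensity (fun x => ENNReal.ofReal (exp (ℓ x))) (S \ B) :=
        measure_le_inter_add_sdiff _ _ _
    _ ≤ Q.withDensity (fun x => ENNReal.ofReal (exp (ℓ x))) (S ∩ B)
        + Q.withDensity (fun x => ENNReal.ofReal (exp (ℓ x))) Bᶜ := by
        gcongr
        exact Set.sdiff_subset_compl S B
    _ ≤ _ := add_le_add h_low h_high

theorem exists_mem_measureReal_ne_ge (Q : Measure α) [IsProbabilityMeasure Q]
    (P : β → Measure α) [∀ p, IsProbabilityMeasure (P p)] {Θ : Finset β} (hΘ : Θ.Nonempty)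
    (est : α → β) {c r : ℝ} (hc : 0 ≤ c)
    (hdom : ∀ p ∈ Θ, ∀ S, MeasurableSet S → (P p).real S ≤ c * Q.real S + r) :
    ∃ p ∈ Θ, 1 - c / Θ.card - r ≤ (P p).real {x | est x ≠ p} := by
  set T := fun p => (toMeasurable (P p) {x | est x ≠ p})ᶜ
  have hT : ∀ p, MeasurableSet (T p) := fun p => (measurableSet_toMeasurable _ _).compl
  have hT_est : ∀ p, ∀ x ∈ T p, est x = p := fun p x hx => by
    by_contra h
    exact hx (subset_toMeasurable _ _ h)
  have hdisj : Set.PairwiseDisjoint (Θ : Set β) T := fun p _ q _ hpq =>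
    Set.disjoint_left.mpr fun x hp hq => hpq ((hT_est p x hp).symm.trans (hT_est q x hq))
  obtain ⟨p, hp, hQ⟩ : ∃ p ∈ Θ, Q.real (T p) ≤ 1 / Θ.card := by
    refine Finset.exists_le_of_sum_le hΘ ?_
    rw [Finset.sum_const, nsmul_eq_mul, mul_one_div_cancel (by exact_mod_cast hΘ.card_ne_zero),
      ← measureReal_biUnion_finset hdisj fun p _ => hT p]
    exact measureReal_le_one
  refine ⟨p, hp, ?_⟩
  have herr : (P p).real {x | est x ≠ p} = 1 - (P p).real (T p) := by
    rw [probReal_compl_eq_one_sub (measurableSet_toMeasurable _ _), measureReal_def,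
      measureReal_def, measure_toMeasurable, sub_sub_cancel]
  have := hdom p hp (T p) (hT p)
  have : c * Q.real (T p) ≤ c / Θ.card := by
    simpa only [mul_one_div] using mul_le_mul_of_nonneg_left hQ hc
  linarith

end MeasureTheory

namespace ProbabilityTheory

variable {v : ℝ≥0}

lemma gaussianReal_eq_withDensity_exp (hv : v ≠ 0) (a : ℝ) :
    gaussianReal a v
      = (gaussianReal 0 v).withDensity fun x => ENNReal.ofReal (exp ((a * x - a ^ 2 / 2) / v)) := by
  have hv' : (v : ℝ) ≠ 0 := by exact_mod_cast hv
  rw [gaussianReal_of_var_ne_zero _ hv, gaussianReal_of_var_ne_zero _ hv,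
    ← withDensity_mul _ (measurable_gaussianPDF 0 v) (by fun_prop)]
  congr 1
  ext x
  rw [Pi.mul_apply, gaussianPDF, gaussianPDF, ← ENNReal.ofReal_mul (gaussianPDFReal_nonneg 0 v x)]
  congr 1
  rw [gaussianPDFReal, gaussianPDFReal, mul_assoc _ (rexp _), ← exp_add]
  congr 2
  field_simp
  ring

lemma lintegral_exp_mul_gaussianReal (μ t : ℝ) :
    ∫⁻ x, ENNReal.ofReal (exp (t * x)) ∂gaussianReal μ v
      = ENNReal.ofReal (exp (μ * t + v * t ^ 2 / 2)) := by
  rw [← ofReal_integral_eq_lintegral_ofReal (integrable_exp_mul_gaussianReal t)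
    (ae_of_all _ fun _ => (exp_pos _).le), ← congrFun mgf_id_gaussianReal t]
  rfl

lemma lintegral_exp_mul_logLikelihoodRatio_gaussianReal (a t : ℝ) :
    ∫⁻ x, ENNReal.ofReal (exp (t * ((a * x - a ^ 2 / 2) / v))) ∂gaussianReal 0 v
      = ENNReal.ofReal (exp (t * (t - 1) * a ^ 2 / (2 * v))) := by
  have hsplit : ∀ x, t * ((a * x - a ^ 2 / 2) / v) = t * a / v * x + -(t * a ^ 2 / (2 * v)) :=
    fun x => by ring
  simp_rw [hsplit, exp_add, ENNReal.ofReal_mul (exp_pos _).le]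
  rw [lintegral_mul_const _ (by fun_prop), lintegral_exp_mul_gaussianReal,
    ← ENNReal.ofReal_mul (exp_pos _).le, ← exp_add]
  congr 2
  by_cases hv : (v : ℝ) = 0
  · simp [hv]
  · field_simp
    ring

end ProbabilityTheory

theorem Nat.pow_le_pow_mul_choose {n k : ℕ} (hkn : k ≤ n) : n ^ k ≤ k ^ k * n.choose k := by
  have key : ∏ i ∈ Finset.range k, n * (k - i) ≤ ∏ i ∈ Finset.range k, k * (n - i) :=
    Finset.prod_le_prod' fun i _ => by
      rw [Nat.mul_sub, Nat.mul_sub, mul_comm n k]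
      exact Nat.sub_le_sub_left (Nat.mul_le_mul_right i hkn) _
  rw [← Finset.pow_card_mul_prod, ← Finset.pow_card_mul_prod, Finset.card_range,
    ← Nat.descFactorial_eq_prod_range, ← Nat.descFactorial_eq_prod_range, Nat.descFactorial_self,
    Nat.descFactorial_eq_factorial_mul_choose, mul_left_comm, mul_comm (n ^ k)] at key
  exact Nat.le_of_mul_le_mul_left key k.factorial_pos

lemma Real.exp_mul_log_div_le_choose {n k : ℕ} (hk : 0 < k) (hkn : k ≤ n) :
    exp (k * log (n / k)) ≤ n.choose k := by
  have hk' : (0 : ℝ) < k := by exact_mod_cast hk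
  have hn' : (0 : ℝ) < n := by exact_mod_cast hk.trans_le hkn
  rw [← log_rpow (div_pos hn' hk'), exp_log (by positivity), rpow_natCast, div_pow,
    div_le_iff₀ (by positivity), mul_comm]
  exact_mod_cast Nat.pow_le_pow_mul_choose hkn

lemma Real.one_half_le_mul_log_div {n k : ℕ} (hk : 0 < k) (hkn : k < n) :
    1 / 2 ≤ k * log (n / k) := by
  have hk' : (1 : ℝ) ≤ k := by exact_mod_cast hk
  have hkn' : (k : ℝ) + 1 ≤ n := by exact_mod_cast hkn
  have hlog := one_sub_inv_le_log_of_pos (x := n / k) (by apply div_pos <;> linarith)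
  rw [inv_div] at hlog
  have : (1 : ℝ) / 2 ≤ k * (1 - k / n) := by
    rw [mul_one_sub, ← mul_div_assoc, le_sub_iff_add_le, ← le_sub_iff_add_le',
      div_le_iff₀ (by linarith)]
    nlinarith
  exact this.trans (by gcongr)

lemma Real.exp_div_le_log_two_div {D N : ℝ} (hD : 0 < D) (hN : exp D ≤ N) :
    exp (2 / 5 * D) / N ≤ log 2 / D := by
  -- `x e^{-x} ≤ e^{-1}` with `x = 3D/5`, and `5 / 3 < e log 2`
  have hx : 3 / 5 * D ≤ exp (3 / 5 * D - 1) := by linarith [add_one_le_exp (3 / 5 * D - 1)]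
  have he : (5 : ℝ) / 3 ≤ exp 1 * log 2 := by
    nlinarith [exp_one_gt_d9, log_two_gt_d9]
  rw [div_le_div_iff₀ ((exp_pos D).trans_le hN) hD]
  calc exp (2 / 5 * D) * D ≤ exp (2 / 5 * D) * (5 / 3 * exp (3 / 5 * D - 1)) := by gcongr; linarith
    _ = 5 / 3 / exp 1 * exp D := by rw [exp_sub]; field_simp; rw [← exp_add]; ring_nf
    _ ≤ log 2 * N := by
      gcongr
      · rw [div_le_iff₀ (exp_pos 1)]; linarith

lemma sq_mul_div_le_of_div_le_sqrt {lam σ c km kn Lm Ln : ℝ} (hσ : 0 ≤ σ) (hlam : 0 ≤ lam)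
    (hc : 0 ≤ c) (hkm : 0 < km) (hkn : 0 < kn) (hD : 0 ≤ km * Lm + kn * Ln)
    (h : lam / σ ≤ √c * √(Lm / kn + Ln / km)) :
    lam ^ 2 * (km * kn) / (2 * σ ^ 2) ≤ c / 2 * (km * Lm + kn * Ln) := by
  have hsum : Lm / kn + Ln / km = (km * Lm + kn * Ln) / (km * kn) := by field_simp
  have hsq := pow_le_pow_left₀ (by positivity) h 2
  rw [hsum, mul_pow, sq_sqrt hc, sq_sqrt (by positivity), div_pow] at hsq
  calc lam ^ 2 * (km * kn) / (2 * σ ^ 2) = lam ^ 2 / σ ^ 2 * (km * kn) / 2 := by ring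
    _ ≤ c * ((km * Lm + kn * Ln) / (km * kn)) * (km * kn) / 2 := by gcongr
    _ = c / 2 * (km * Lm + kn * Ln) := by field_simp

lemma chernoff_exponent_le {a θ K D : ℝ} (ha : a ≤ 0) (hθ : θ = 1 - 5 * a) (hD : 1 ≤ D)
    (hK : K ≤ 2 / (5 * θ) / 2 * D) :
    θ * (1 + θ) * K - θ * (2 / 5 * D) ≤ a := by
  have hθ1 : 1 ≤ θ := by linarith
  have hθK : θ * (1 + θ) * K ≤ (1 + θ) * D / 5 :=
    calc θ * (1 + θ) * K ≤ θ * (1 + θ) * (2 / (5 * θ) / 2 * D) := by gcongr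
      _ = (1 + θ) * D / 5 := by field_simp
  nlinarith [mul_nonneg (sub_nonneg.mpr hD) (neg_nonneg.mpr ha)]

section SubmatrixModel

variable {m n : ℕ} {σ : ℝ}

noncomputable def logLikelihoodRatio (σ : ℝ) (M X : Fin m → Fin n → ℝ) : ℝ :=
  ∑ i, ∑ j, (M i j * X i j - M i j ^ 2 / 2) / σ ^ 2

lemma measurable_logLikelihoodRatio (M : Fin m → Fin n → ℝ) :
    Measurable (logLikelihoodRatio σ M) := by
  unfold logLikelihoodRatio
  fun_prop

instance isProbabilityMeasure_PM (M : Fin m → Fin n → ℝ) : IsProbabilityMeasure (PM m n σ M) := by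
  unfold PM
  infer_instance

lemma coe_toNNReal_sq (σ : ℝ) : ((σ ^ 2).toNNReal : ℝ) = σ ^ 2 :=
  Real.coe_toNNReal _ (sq_nonneg σ)

lemma PM_eq_withDensity (hσ : σ ≠ 0) (M : Fin m → Fin n → ℝ) :
    PM m n σ M
      = (PM m n σ 0).withDensity fun X => ENNReal.ofReal (exp (logLikelihoodRatio σ M X)) := by
  have hv : (σ ^ 2).toNNReal ≠ 0 := by simpa using hσ
  unfold PM logLikelihoodRatio
  refine Measure.pi_eq_withDensity_exp_sum (E := fun _ => Fin n → ℝ)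
    (ℓ := fun i x => ∑ j, (M i j * x j - M i j ^ 2 / 2) / σ ^ 2) (fun i => by fun_prop) fun i => ?_
  refine Measure.pi_eq_withDensity_exp_sum (E := fun _ => ℝ)
    (ℓ := fun j x => (M i j * x - M i j ^ 2 / 2) / σ ^ 2) (fun j => by fun_prop) fun j => ?_
  rw [gaussianReal_eq_withDensity_exp hv, coe_toNNReal_sq]
  rfl

lemma lintegral_exp_mul_logLikelihoodRatio (M : Fin m → Fin n → ℝ) (t : ℝ) :
    ∫⁻ X, ENNReal.ofReal (exp (t * logLikelihoodRatio σ M X)) ∂PM m n σ 0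
      = ENNReal.ofReal (exp (t * (t - 1) * ((∑ i, ∑ j, M i j ^ 2) / (2 * σ ^ 2)))) := by
  have hrow : ∀ i, ∫⁻ x, ENNReal.ofReal (exp (∑ j, t * ((M i j * x j - M i j ^ 2 / 2) / σ ^ 2)))
      ∂Measure.pi (fun _ => gaussianReal 0 (σ ^ 2).toNNReal)
      = ∏ j, ENNReal.ofReal (exp (t * (t - 1) * M i j ^ 2 / (2 * σ ^ 2))) := fun i => by
    rw [lintegral_exp_sum_pi (E := fun _ => ℝ)
      (ℓ := fun j x => t * ((M i j * x - M i j ^ 2 / 2) / σ ^ 2)) fun j => by fun_prop]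
    refine Finset.prod_congr rfl fun j _ => ?_
    have := lintegral_exp_mul_logLikelihoodRatio_gaussianReal (v := (σ ^ 2).toNNReal) (M i j) t
    rw [coe_toNNReal_sq] at this
    exact this
  simp_rw [logLikelihoodRatio, Finset.mul_sum]
  rw [PM, lintegral_exp_sum_pi (E := fun _ => Fin n → ℝ)
    (ℓ := fun i x => ∑ j, t * ((M i j * x j - M i j ^ 2 / 2) / σ ^ 2)) fun i => by fun_prop]
  refine (Finset.prod_congr rfl fun i _ => hrow i).trans ?_
  simp_rw [Finset.sum_div, Finset.mul_sum, ENNReal.ofReal_exp_sum, mul_div_assoc]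

lemma measureReal_PM_le (hσ : σ ≠ 0) (M : Fin m → Fin n → ℝ) {S : Set (Fin m → Fin n → ℝ)}
    (hS : MeasurableSet S) (u : ℝ) {θ : ℝ} (hθ : 0 ≤ θ) :
    (PM m n σ M).real S ≤ exp u * (PM m n σ 0).real S
      + exp (θ * (1 + θ) * ((∑ i, ∑ j, M i j ^ 2) / (2 * σ ^ 2)) - θ * u) := by
  have h := withDensity_exp_apply_le (PM m n σ 0) (measurable_logLikelihoodRatio (σ := σ) M) hS u hθ
  rw [← PM_eq_withDensity hσ, lintegral_exp_mul_logLikelihoodRatio, add_sub_cancel_left,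
    ← ENNReal.ofReal_mul (exp_pos _).le, ← exp_add, neg_add_eq_sub] at h
  have h' := ENNReal.toReal_mono (by finiteness) h
  rwa [ENNReal.toReal_add (by finiteness) (by finiteness), ENNReal.toReal_mul,
    ENNReal.toReal_ofReal (exp_pos _).le, ENNReal.toReal_ofReal (exp_pos _).le, ← measureReal_def,
    ← measureReal_def, mul_comm (1 + θ) θ] at h'

lemma sum_sq_signalMatrix (lam : ℝ) (R : Finset (Fin m)) (C : Finset (Fin n)) :
    ∑ i, ∑ j, signalMatrix m n lam R C i j ^ 2 = lam ^ 2 * (R.card * C.card) := by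
  simp [signalMatrix, ite_pow, ite_and, Finset.sum_ite_mem]
  ring

end SubmatrixModel

lemma Θset_eq_product (m n k_m k_n : ℕ) :
    Θset m n k_m k_n = Finset.univ.powersetCard k_m ×ˢ Finset.univ.powersetCard k_n := by
  ext p
  simp [Θset, Finset.mem_powersetCard]

lemma card_Θset (m n k_m k_n : ℕ) :
    (Θset m n k_m k_n).card = m.choose k_m * n.choose k_n := by
  simp [Θset_eq_product, Finset.card_powersetCard]

lemma Θset_nonempty {m n k_m k_n : ℕ} (hkm : k_m ≤ m) (hkn : k_n ≤ n) :
    (Θset m n k_m k_n).Nonempty := by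
  rw [← Finset.card_pos, card_Θset]
  exact Nat.mul_pos (Nat.choose_pos hkm) (Nat.choose_pos hkn)

lemma exp_le_card_Θset {m n k_m k_n : ℕ} (hkm0 : 0 < k_m) (hkm : k_m ≤ m) (hkn0 : 0 < k_n)
    (hkn : k_n ≤ n) :
    exp (k_m * log (m / k_m) + k_n * log (n / k_n)) ≤ (Θset m n k_m k_n).card := by
  rw [exp_add, card_Θset, Nat.cast_mul]
  exact mul_le_mul (exp_mul_log_div_le_choose hkm0 hkm) (exp_mul_log_div_le_choose hkn0 hkn)
    (exp_pos _).le (Nat.cast_nonneg _)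

theorem stmt_12 (α : ℝ) (hα0 : 0 < α) (hα1 : α < 1) :
    ∃ Cα > (0 : ℝ), ∀ (m n k_m k_n : ℕ) (σ lam : ℝ), 0 < σ → 0 < lam →
      1 ≤ k_m → k_m < m → 1 ≤ k_n → k_n < n →
      lam / σ ≤ Cα * Real.sqrt (Real.log ((m : ℝ) / k_m) / k_n
        + Real.log ((n : ℝ) / k_n) / k_m) →
      ∀ est : (Fin m → Fin n → ℝ) → Finset (Fin m) × Finset (Fin n),
        ∃ p ∈ Θset m n k_m k_n,
          1 - α - Real.log 2 /
              ((k_m : ℝ) * Real.log ((m : ℝ) / k_m) + (k_n : ℝ) * Real.log ((n : ℝ) / k_n)) ≤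
            (PM m n σ (signalMatrix m n lam p.1 p.2) {X | est X ≠ p}).toReal := by
  set θ := 1 - 5 * log α
  have hθ : 1 ≤ θ := by linarith [log_neg hα0 hα1]
  refine ⟨√(2 / (5 * θ)), by positivity, ?_⟩
  intro m n k_m k_n σ lam hσ hlam hkm1 hkmm hkn1 hknn hsnr est
  set D := (k_m : ℝ) * log (m / k_m) + k_n * log (n / k_n)
  have hD : 1 ≤ D := by
    linarith [one_half_le_mul_log_div hkm1 hkmm, one_half_le_mul_log_div hkn1 hknn]
  have hK := sq_mul_div_le_of_div_le_sqrt hσ.le hlam.le (by positivity) (by positivity)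
    (by positivity) (by linarith) hsnr
  have hdom : ∀ p ∈ Θset m n k_m k_n, ∀ S, MeasurableSet S →
      (PM m n σ (signalMatrix m n lam p.1 p.2)).real S
        ≤ exp (2 / 5 * D) * (PM m n σ 0).real S + α := fun p hp S hS => by
    obtain ⟨hR, hC⟩ := (Finset.mem_filter.mp hp).2
    refine (measureReal_PM_le hσ.ne' _ hS (2 / 5 * D) (by linarith : 0 ≤ θ)).trans ?_
    rw [sum_sq_signalMatrix, hR, hC]
    gcongr
    exact (exp_le_exp.mpr (chernoff_exponent_le (log_neg hα0 hα1).le rfl hD hK)).trans_eq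
      (exp_log hα0)
  obtain ⟨p, hp, herr⟩ := exists_mem_measureReal_ne_ge _ _ (Θset_nonempty hkmm.le hknn.le) est
    (exp_pos _).le hdom
  have hfew : exp (2 / 5 * D) / (Θset m n k_m k_n).card ≤ log 2 / D :=
    exp_div_le_log_two_div (by linarith) (exp_le_card_Θset hkm1 hkmm.le hkn1 hknn.le)
  rw [measureReal_def] at herr
  exact ⟨p, hp, by linarith⟩
end
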